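/- arXiv:2502.06429 — 4 statements merged into one kernel-verified Lean document; each statement's English description precedes it below -/
import Mathlib

section
/- If 0 < β < 1, then m = 0 is the unique solution in [-1,1] of the equation (1-m)e^{βm} = (1+m)e^{-βm}. -/
/-! Inside `(-1, 1)` the equation is equivalent, after taking logarithms, to `φ m = 0` for
`φ x = log (1 + x) - log (1 - x) - 2βx`. Since `φ' x = 2 / (1 - x²) - 2β ≥ 2 - 2β > 0`, the
function `φ` is strictly increasing, so its only zero is `φ 0 = 0`. At `m = ±1` exactly one side
of the equation vanishes. -/

open Real

theorem hasDerivAt_log_one_add_sub_log_one_sub {x : ℝ} (hx : x ∈ Set.Ioo (-1 : ℝ) 1) :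
    HasDerivAt (fun y : ℝ => log (1 + y) - log (1 - y)) (2 / (1 - x ^ 2)) x := by
  obtain ⟨hx₀, hx₁⟩ := hx
  have hadd : HasDerivAt (fun y : ℝ => log (1 + y)) (1 / (1 + x)) x := by
    simpa using ((hasDerivAt_id' x).const_add 1).log (by linarith)
  have hsub : HasDerivAt (fun y : ℝ => log (1 - y)) (-1 / (1 - x)) x := by
    simpa using ((hasDerivAt_id' x).const_sub 1).log (by linarith)
  refine (hadd.fun_sub hsub).congr_deriv ?_
  have h₁ : 1 + x ≠ 0 := by linarith
  have h₂ : 1 - x ≠ 0 := by linarith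
  have h₃ : 1 - x ^ 2 ≠ 0 := by nlinarith
  field_simp
  ring

theorem strictMonoOn_log_one_add_sub_log_one_sub_sub_mul {β : ℝ} (hβ : β < 1) :
    StrictMonoOn (fun x : ℝ => log (1 + x) - log (1 - x) - 2 * β * x) (Set.Ioo (-1) 1) := by
  have hderiv : ∀ x ∈ Set.Ioo (-1 : ℝ) 1, HasDerivAt
      (fun x : ℝ => log (1 + x) - log (1 - x) - 2 * β * x) (2 / (1 - x ^ 2) - 2 * β) x :=
    fun x hx => (hasDerivAt_log_one_add_sub_log_one_sub hx).fun_sub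
      (by simpa using (hasDerivAt_id' x).const_mul (2 * β))
  refine strictMonoOn_of_hasDerivWithinAt_pos (convex_Ioo _ _) ?_
    (fun x hx => (hderiv x (interior_subset hx)).hasDerivWithinAt) ?_
  · exact fun x hx => (hderiv x hx).continuousAt.continuousWithinAt
  · intro x hx
    rw [interior_Ioo] at hx
    obtain ⟨hx₀, hx₁⟩ := hx
    have hsq : 0 < 1 - x ^ 2 := by nlinarith
    have hge : 2 ≤ 2 / (1 - x ^ 2) := by
      rw [le_div_iff₀ hsq]
      nlinarith
    linarith

theorem one_sub_mul_exp_eq_one_add_mul_exp_neg_iff {β m : ℝ} (hm : m ∈ Set.Ioo (-1 : ℝ) 1) :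
    (1 - m) * exp (β * m) = (1 + m) * exp (-β * m) ↔
      log (1 + m) - log (1 - m) - 2 * β * m = 0 := by
  obtain ⟨hm₀, hm₁⟩ := hm
  rw [← exp_log (show 0 < 1 - m by linarith), ← exp_log (show 0 < 1 + m by linarith),
    ← exp_add, ← exp_add, exp_eq_exp, log_exp, log_exp]
  constructor <;> intro h <;> linarith

theorem curie_weiss_unique_critical_point_high_temp_general (β : ℝ) (hβ1 : β < 1) :
    ∀ m ∈ Set.Icc (-1 : ℝ) 1,
      ((1 - m) * exp (β * m) = (1 + m) * exp (-β * m) ↔ m = 0) := by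
  intro m hm
  rcases Set.eq_endpoints_or_mem_Ioo_of_mem_Icc hm with rfl | rfl | hm
  · simp [(exp_pos _).ne']
  · simp
  · have h₀ : (0 : ℝ) ∈ Set.Ioo (-1) 1 := by norm_num
    rw [one_sub_mul_exp_eq_one_add_mul_exp_neg_iff hm]
    refine ⟨fun h => (strictMonoOn_log_one_add_sub_log_one_sub_sub_mul hβ1).injOn hm h₀ ?_,
      fun h => by simp [h]⟩
    simpa using h

theorem curie_weiss_unique_critical_point_high_temp (β : ℝ) (hβ0 : 0 < β) (hβ1 : β < 1) :
    ∀ m ∈ Set.Icc (-1 : ℝ) 1,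
      ((1 - m) * exp (β * m) = (1 + m) * exp (-β * m) ↔ m = 0) :=
  curie_weiss_unique_critical_point_high_temp_general β hβ1
end

section
/- If β > 1, there exists m₊ ∈ (0,1) such that (1-m₊)e^{βm₊} = (1+m₊)e^{-βm₊}, i.e. the Curie-Weiss drift has a zero strictly between 0 and 1. -/
open Real

noncomputable def curieWeissDrift (β m : ℝ) : ℝ :=
  (1 - m) * exp (β * m) - (1 + m) * exp (-β * m)

theorem continuous_curieWeissDrift (β : ℝ) : Continuous (curieWeissDrift β) := by
  unfold curieWeissDrift
  fun_prop

theorem curieWeissDrift_eq_exp_mul (β m : ℝ) :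
    curieWeissDrift β m = exp (-β * m) * ((1 - m) * exp (2 * β * m) - (1 + m)) := by
  have h : exp (β * m) = exp (-β * m) * exp (2 * β * m) := by
    rw [← exp_add]
    ring_nf
  rw [curieWeissDrift, h]
  ring

theorem curieWeissDrift_one_neg (β : ℝ) : curieWeissDrift β 1 < 0 := by
  have := exp_pos (-β * 1)
  rw [curieWeissDrift]
  linarith

theorem sub_one_div_two_mul_mem_Ioo {β : ℝ} (hβ : 1 < β) : (β - 1) / (2 * β) ∈ Set.Ioo 0 1 := by
  constructor
  · exact div_pos (by linarith) (by linarith)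
  · rw [div_lt_one (by linarith)]
    linarith

/-- At `m = (β - 1) / (2β)` the exponent `2βm` is `β - 1`, and already the tangent-line bound
`β < e^{β - 1}` gives `1 + m < (1 - m) e^{2βm}`. -/
theorem curieWeissDrift_pos {β : ℝ} (hβ : 1 < β) :
    0 < curieWeissDrift β ((β - 1) / (2 * β)) := by
  set m := (β - 1) / (2 * β) with hm
  have hm1 : m < 1 := (sub_one_div_two_mul_mem_Ioo hβ).2
  have h2βm : 2 * β * m = β - 1 := by
    rw [hm]
    field_simp
  have hexp : β < exp (β - 1) := by
    linarith [add_one_lt_exp (x := β - 1) (by linarith)]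
  have hlin : 1 + m ≤ (1 - m) * β := by
    have hmul : (1 - m) * β = (β + 1) / 2 := by
      rw [hm]
      field_simp
      ring
    have hm_le : m ≤ (β - 1) / 2 := by
      rw [hm, div_le_div_iff₀ (by positivity) two_pos]
      nlinarith
    linarith
  rw [curieWeissDrift_eq_exp_mul]
  refine mul_pos (exp_pos _) (sub_pos.2 ?_)
  calc 1 + m ≤ (1 - m) * β := hlin
    _ < (1 - m) * exp (2 * β * m) := by
      rw [h2βm]
      exact mul_lt_mul_of_pos_left hexp (by linarith)

theorem curie_weiss_positive_zero_exists (β : ℝ) (hβ : 1 < β) :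
    ∃ m ∈ Set.Ioo (0 : ℝ) 1,
      (1 - m) * exp (β * m) = (1 + m) * exp (-β * m) := by
  have hm₀ := sub_one_div_two_mul_mem_Ioo hβ
  obtain ⟨m, hm, hzero⟩ :=
    intermediate_value_Ioo' hm₀.2.le (continuous_curieWeissDrift β).continuousOn
      ⟨curieWeissDrift_one_neg β, curieWeissDrift_pos hβ⟩
  exact ⟨m, ⟨hm₀.1.trans hm.1, hm.2⟩, sub_eq_zero.1 hzero⟩
end

section
/- For β > 1, the function f(β) = β(1 - √(1 - 1/β))² · e^{2β√(1-1/β)} satisfies f(1) = 1 and f'(β) > 0 for all β > 1; consequently f(β) > 1 for all β > 1. -/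
/-! Put `m = √(1 - 1/β)`, so that `β * m ^ 2 = β - 1` for `β ≥ 1`. Differentiating logarithmically,
the terms `1/β` and `-1/β` coming from the factors `β` and `(1 - m)²` cancel, leaving
`f' = 2 m f`. For `β > 1` we have `0 < m < 1`, hence `f > 0` and `f' > 0`; so `f` is strictly
increasing on `[1, ∞)`, and `f(1) = 1` gives `f > 1` there. -/

open Real

noncomputable def cwRatio (β : ℝ) : ℝ :=
  β * (1 - Real.sqrt (1 - 1/β))^2 * Real.exp (2 * β * Real.sqrt (1 - 1/β))

open Set

section

variable {β : ℝ}

lemma sqrt_one_sub_inv_pos (hβ : 1 < β) : 0 < √(1 - 1/β) := by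
  rw [Real.sqrt_pos, sub_pos, div_lt_one (by linarith)]
  exact hβ

lemma sqrt_one_sub_inv_lt_one (hβ : 1 < β) : √(1 - 1/β) < 1 := by
  rw [Real.sqrt_lt' one_pos, one_pow, sub_lt_self_iff]
  positivity

lemma cwRatio_one : cwRatio 1 = 1 := by
  simp [cwRatio]

lemma cwRatio_pos (hβ : 1 < β) : 0 < cwRatio β := by
  have : 0 < 1 - √(1 - 1/β) := sub_pos.2 (sqrt_one_sub_inv_lt_one hβ)
  unfold cwRatio
  positivity

lemma hasDerivAt_cwRatio (hβ : 1 < β) :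
    HasDerivAt cwRatio (2 * √(1 - 1/β) * cwRatio β) β := by
  have hβ0 : β ≠ 0 := by linarith
  have hu : 0 < 1 - 1/β := Real.sqrt_pos.mp (sqrt_one_sub_inv_pos hβ)
  have hm : HasDerivAt (fun x : ℝ => √(1 - 1/x)) (1/β^2 / (2 * √(1 - 1/β))) β := by
    refine HasDerivAt.sqrt ?_ hu.ne'
    simpa [one_div] using (hasDerivAt_inv hβ0).const_sub 1
  have hf := ((hasDerivAt_id' β).mul ((hm.const_sub 1).pow 2)).mul
    (((hasDerivAt_id' β).const_mul 2).mul hm).exp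
  refine hf.congr_deriv ?_
  simp only [Pi.mul_apply, Pi.pow_apply, cwRatio]
  set m := √(1 - 1/β) with hm_def
  have hm0 : m ≠ 0 := (sqrt_one_sub_inv_pos hβ).ne'
  have hm2 : β * m ^ 2 = β - 1 := by
    rw [hm_def, Real.sq_sqrt hu.le]
    field_simp
  field_simp
  linear_combination (2 * m - 2) * hm2

lemma deriv_cwRatio_pos (hβ : 1 < β) : 0 < deriv cwRatio β := by
  rw [(hasDerivAt_cwRatio hβ).deriv]
  exact mul_pos (mul_pos two_pos (sqrt_one_sub_inv_pos hβ)) (cwRatio_pos hβ)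

end

lemma continuousOn_cwRatio : ContinuousOn cwRatio (Ici 1) := by
  unfold cwRatio
  fun_prop (disch := intro x hx; exact (zero_lt_one.trans_le hx).ne')

lemma strictMonoOn_cwRatio : StrictMonoOn cwRatio (Ici 1) := by
  refine strictMonoOn_of_deriv_pos (convex_Ici 1) continuousOn_cwRatio fun β hβ => ?_
  rw [interior_Ici] at hβ
  exact deriv_cwRatio_pos hβ

theorem cwRatio_one_and_monotone :
    cwRatio 1 = 1 ∧ (∀ β : ℝ, 1 < β → 0 < deriv cwRatio β) ∧
      ∀ β : ℝ, 1 < β → 1 < cwRatio β := by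
  refine ⟨cwRatio_one, fun β hβ => deriv_cwRatio_pos hβ, fun β hβ => ?_⟩
  simpa [cwRatio_one] using strictMonoOn_cwRatio self_mem_Ici hβ.le hβ
end

section
/- If β > 1 and m₊ ∈ (0,1) is the positive zero of the Curie-Weiss drift (i.e. (1+m₊)e^{-βm₊} = (1-m₊)e^{βm₊}), then m₊ > √(1 - 1/β), and consequently g''(m₊) > 0. -/
/-!
Taking logarithms, m₊ is a positive zero of φ(x) = log (1 + x) - log (1 - x) - 2βx, and φ(0) = 0.
Since φ'(x) = 2 / (1 - x²) - 2β is negative exactly when x² < 1 - 1/β, φ is strictly decreasing on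
[-√(1 - 1/β), √(1 - 1/β)], so it has no positive zero there. Squaring m₊ > √(1 - 1/β) gives
β m₊² > β - 1, which is the sign of g''(m₊).
-/

open Real Set

/-- The logarithm of `(1 + x) e^{-βx} / ((1 - x) e^{βx})`: its zeros in `(-1, 1)` are those of the
Curie-Weiss drift. -/
noncomputable def curieWeissLogRatio (β x : ℝ) : ℝ :=
  log (1 + x) - log (1 - x) - 2 * β * x

lemma curieWeissLogRatio_zero (β : ℝ) : curieWeissLogRatio β 0 = 0 := by
  simp [curieWeissLogRatio]

lemma curieWeissLogRatio_eq_zero {β m : ℝ} (hm : m ∈ Ioo (-1 : ℝ) 1)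
    (heq : (1 + m) * exp (-β * m) = (1 - m) * exp (β * m)) :
    curieWeissLogRatio β m = 0 := by
  have hlog := congrArg log heq
  rw [log_mul (by linarith [hm.1]) (exp_ne_zero _), log_mul (by linarith [hm.2]) (exp_ne_zero _),
    log_exp, log_exp] at hlog
  rw [curieWeissLogRatio]
  linarith

lemma hasDerivAt_curieWeissLogRatio (β : ℝ) {x : ℝ} (hx : x ∈ Ioo (-1 : ℝ) 1) :
    HasDerivAt (curieWeissLogRatio β) (2 / (1 - x ^ 2) - 2 * β) x := by
  have h1p : 1 + x ≠ 0 := by linarith [hx.1]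
  have h1m : 1 - x ≠ 0 := by linarith [hx.2]
  have hlogp := ((hasDerivAt_id x).const_add 1).log h1p
  have hlogm := ((hasDerivAt_id x).const_sub 1).log h1m
  refine ((hlogp.sub hlogm).sub ((hasDerivAt_id x).const_mul (2 * β))).congr_deriv ?_
  have h1x2 : 1 - x ^ 2 ≠ 0 := by
    rw [show 1 - x ^ 2 = (1 + x) * (1 - x) by ring]; exact mul_ne_zero h1p h1m
  simp only [id]
  field_simp
  ring

lemma strictAntiOn_curieWeissLogRatio {β a : ℝ} (hβ : 0 < β) (ha : a ^ 2 ≤ 1 - 1 / β) :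
    StrictAntiOn (curieWeissLogRatio β) (Icc (-a) a) := by
  have ha1 : a ^ 2 < 1 := ha.trans_lt (by simp [hβ])
  have hIcc : ∀ x ∈ Icc (-a) a, x ∈ Ioo (-1 : ℝ) 1 := fun x hx =>
    ⟨by nlinarith [hx.1, hx.2], by nlinarith [hx.1, hx.2]⟩
  refine strictAntiOn_of_hasDerivWithinAt_neg (convex_Icc _ _)
    (fun x hx => (hasDerivAt_curieWeissLogRatio β (hIcc x hx)).continuousAt.continuousWithinAt)
    (fun x hx => (hasDerivAt_curieWeissLogRatio β
      (hIcc x (interior_subset hx))).hasDerivWithinAt) ?_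
  intro x hx
  rw [interior_Icc] at hx
  obtain ⟨hax, hxa⟩ := hx
  have hx2 : 1 / β < 1 - x ^ 2 := by nlinarith [sq_lt_sq' hax hxa]
  have hβx : 1 < β * (1 - x ^ 2) := by rwa [div_lt_iff₀' hβ] at hx2
  rw [sub_neg, div_lt_iff₀ (by linarith [one_div_pos.mpr hβ] : (0 : ℝ) < 1 - x ^ 2)]
  linarith

theorem curie_weiss_mplus_gt_sqrt (β mplus : ℝ) (hβ : 1 < β)
    (hm : mplus ∈ Set.Ioo (0 : ℝ) 1)
    (heq : (1 + mplus) * exp (-β * mplus) = (1 - mplus) * exp (β * mplus)) :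
    Real.sqrt (1 - 1/β) < mplus ∧
      0 < (2 * exp (β * mplus) / (1 + mplus)) * (1 - β + β * mplus ^ 2) := by
  obtain ⟨hm0, hm1⟩ := hm
  have hβ0 : 0 < β := one_pos.trans hβ
  have hs0 : 0 ≤ √(1 - 1 / β) := sqrt_nonneg _
  have hs2 : √(1 - 1 / β) ^ 2 = 1 - 1 / β :=
    sq_sqrt (sub_nonneg.mpr ((div_le_one hβ0).mpr hβ.le))
  have hsqrt : √(1 - 1 / β) < mplus := by
    by_contra! hle
    have hlt := strictAntiOn_curieWeissLogRatio hβ0 hs2.le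
      ⟨by linarith, hs0⟩ ⟨by linarith, hle⟩ hm0
    rw [curieWeissLogRatio_eq_zero ⟨by linarith, hm1⟩ heq, curieWeissLogRatio_zero] at hlt
    exact hlt.false
  have hsq : 1 - 1 / β < mplus ^ 2 := (sqrt_lt' hm0).mp hsqrt
  have hcurv : 0 < 1 - β + β * mplus ^ 2 := by
    have := mul_lt_mul_of_pos_left hsq hβ0
    rw [mul_sub, mul_one_div_cancel hβ0.ne'] at this
    linarith
  exact ⟨hsqrt, mul_pos (div_pos (by positivity) (by linarith)) hcurv⟩
end
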